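/- Let A<B, γ∈(0,1], and let f:[A,B]→ℝ be four times continuously differentiable with f⁽⁴⁾ γ-Hölder continuous on [A,B] and with f'(x)>0 for all x∈[A,B]. Then there exists a constant C>0, depending only on f, [A,B] and γ, such that for all points x₁,x₂,x₃,θ∈[A,B] one has |D(x₁,x₂,x₃;f) − 1 − (x₁−x₃)·Q(θ,x₁,x₂,x₃)| ≤ C·|x₁−x₃|·Δ_θ^{2+γ}, where Δ_θ = diam{x₁,x₂,x₃,θ}. -/

import Mathlib

/-- Difference quotient of `f` at `a, b`, with the convention that for `a = b`
it equals the prescribed derivative `f' a`. -/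
noncomputable def dq (f f' : ℝ → ℝ) (a b : ℝ) : ℝ :=
  if a = b then f' a else (f a - f b) / (a - b)

/-- Ratio distortion of three points with respect to `f`
(with derivative `f'` used at coinciding points). -/
noncomputable def ratioDist (f f' : ℝ → ℝ) (x₁ x₂ x₃ : ℝ) : ℝ :=
  dq f f' x₁ x₂ / dq f f' x₂ x₃

/-- The expression `Q(θ, x₁, x₂, x₃)` built from `φ_k = f⁽ᵏ⁺¹⁾(θ)/((k+1)!·f'(θ))`
and `dᵢ = xᵢ − θ`, where `f1, f2, f3, f4` are the first four derivatives of `f`. -/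
noncomputable def Qexpr (f1 f2 f3 f4 : ℝ → ℝ) (θ x₁ x₂ x₃ : ℝ) : ℝ :=
  let φ₁ := f2 θ / (2 * f1 θ)
  let φ₂ := f3 θ / (6 * f1 θ)
  let φ₃ := f4 θ / (24 * f1 θ)
  let d₁ := x₁ - θ
  let d₂ := x₂ - θ
  let d₃ := x₃ - θ
  φ₁ + (φ₂ * (d₁ + d₂ + d₃) - φ₁ ^ 2 * (d₂ + d₃)) +
    (φ₃ * (d₁ ^ 2 + d₂ ^ 2 + d₃ ^ 2 + d₁ * d₂ + d₂ * d₃ + d₃ * d₁) -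
      φ₁ * φ₂ * ((d₂ ^ 2 + d₂ * d₃ + d₃ ^ 2) + (d₂ + d₃) * (d₁ + d₂ + d₃)) +
      φ₁ ^ 3 * (d₂ + d₃) ^ 2)

/-! ### Elementary helper lemmas -/

lemma dq_symm (f f' : ℝ → ℝ) (a b : ℝ) : dq f f' a b = dq f f' b a := by
  unfold dq
  by_cases h : a = b
  · simp [h]
  · rw [if_neg h, if_neg (Ne.symm h)]
    rw [div_eq_div_iff (sub_ne_zero.2 h) (sub_ne_zero.2 (Ne.symm h))]
    ring

lemma affine_mem_Icc {A B a b t : ℝ} (ha : a ∈ Set.Icc A B) (hb : b ∈ Set.Icc A B)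
    (ht : t ∈ Set.Icc (0:ℝ) 1) : b + t * (a - b) ∈ Set.Icc A B := by
  have h1 : (1 - t) * (b - A) ≥ 0 := mul_nonneg (by linarith [ht.2]) (by linarith [hb.1])
  have h2 : t * (a - A) ≥ 0 := mul_nonneg ht.1 (by linarith [ha.1])
  have h3 : (1 - t) * (B - b) ≥ 0 := mul_nonneg (by linarith [ht.2]) (by linarith [hb.2])
  have h4 : t * (B - a) ≥ 0 := mul_nonneg ht.1 (by linarith [ha.2])
  constructor <;> nlinarith

lemma affine_mem_Ioo {A B a b t : ℝ} (ha : a ∈ Set.Icc A B) (hb : b ∈ Set.Icc A B)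
    (hab : a ≠ b) (ht : t ∈ Set.Ioo (0:ℝ) 1) : b + t * (a - b) ∈ Set.Ioo A B := by
  rcases lt_or_gt_of_ne hab with h | h
  · have h1 : t * (b - a) > 0 := mul_pos ht.1 (by linarith)
    have h2 : (1 - t) * (b - a) > 0 := mul_pos (by linarith [ht.2]) (by linarith)
    constructor
    · nlinarith [ha.1]
    · nlinarith [hb.2]
  · have h1 : t * (a - b) > 0 := mul_pos ht.1 (by linarith)
    have h2 : (1 - t) * (a - b) > 0 := mul_pos (by linarith [ht.2]) (by linarith)
    constructor
    · nlinarith [hb.1]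
    · nlinarith [ha.2]

lemma abs_sub_le_of_mem_uIcc {a b θ w : ℝ} (hw : w ∈ Set.uIcc a b) :
    |w - θ| ≤ max |a - θ| |b - θ| := by
  rw [Set.mem_uIcc] at hw
  rcases hw with ⟨h1, h2⟩ | ⟨h1, h2⟩ <;> rcases le_total θ w with h | h
  · refine le_max_of_le_right ?_
    rw [abs_of_nonneg (by linarith), abs_of_nonneg (by linarith)]; linarith
  · refine le_max_of_le_left ?_
    rw [abs_of_nonpos (by linarith), abs_of_nonpos (by linarith)]; linarith
  · refine le_max_of_le_left ?_
    rw [abs_of_nonneg (by linarith), abs_of_nonneg (by linarith)]; linarith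
  · refine le_max_of_le_right ?_
    rw [abs_of_nonpos (by linarith), abs_of_nonpos (by linarith)]; linarith

lemma uIcc_subset_Icc' {A B a b : ℝ} (hAB : A ≤ B) (ha : a ∈ Set.Icc A B)
    (hb : b ∈ Set.Icc A B) : Set.uIcc a b ⊆ Set.Icc A B := by
  rw [← Set.uIcc_of_le hAB]
  exact Set.uIcc_subset_uIcc ((Set.uIcc_of_le hAB).symm ▸ ha) ((Set.uIcc_of_le hAB).symm ▸ hb)

lemma affine_abs_le {a b θ Δ t : ℝ} (ht : t ∈ Set.Icc (0:ℝ) 1) (ha : |a - θ| ≤ Δ)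
    (hb : |b - θ| ≤ Δ) : |b + t * (a - b) - θ| ≤ Δ := by
  have h1 : b + t * (a - b) - θ = (1 - t) * (b - θ) + t * (a - θ) := by ring
  rw [h1]
  calc |(1 - t) * (b - θ) + t * (a - θ)| ≤ |(1 - t) * (b - θ)| + |t * (a - θ)| := abs_add_le _ _
    _ = (1 - t) * |b - θ| + t * |a - θ| := by
        rw [abs_mul, abs_mul, abs_of_nonneg (by linarith [ht.2] : (0:ℝ) ≤ 1 - t),
          abs_of_nonneg ht.1]
    _ ≤ (1 - t) * Δ + t * Δ :=
        add_le_add (mul_le_mul_of_nonneg_left hb (by linarith [ht.2]))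
          (mul_le_mul_of_nonneg_left ha ht.1)
    _ = Δ := by ring

/-! ### Integral representation of the difference quotient -/

lemma dq_eq_integral {A B : ℝ} {g ρ : ℝ → ℝ}
    (hg : ∀ x ∈ Set.Icc A B, HasDerivWithinAt g (ρ x) (Set.Icc A B) x)
    (hρ : ContinuousOn ρ (Set.Icc A B))
    {a b : ℝ} (ha : a ∈ Set.Icc A B) (hb : b ∈ Set.Icc A B) :
    dq g ρ a b = ∫ t in (0:ℝ)..1, ρ (b + t * (a - b)) := by
  have hmem : Set.MapsTo (fun t : ℝ => b + t * (a - b)) (Set.Icc 0 1) (Set.Icc A B) :=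
    fun t ht => affine_mem_Icc ha hb ht
  have hcontAff : Continuous (fun t : ℝ => b + t * (a - b)) := by continuity
  have hcontInt : ContinuousOn (fun t : ℝ => ρ (b + t * (a - b))) (Set.Icc 0 1) :=
    hρ.comp hcontAff.continuousOn hmem
  by_cases hab : a = b
  · subst hab
    rw [dq, if_pos rfl]
    simp
  · rw [dq, if_neg hab]
    have hder : ∀ t ∈ Set.Ioo (0:ℝ) 1,
        HasDerivWithinAt (fun s : ℝ => g (b + s * (a - b)))
          (ρ (b + t * (a - b)) * (a - b)) (Set.Ioi t) t := by
      intro t ht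
      have hu := affine_mem_Ioo ha hb hab ht
      have hgat : HasDerivAt g (ρ (b + t * (a - b))) (b + t * (a - b)) :=
        (hg _ (Set.Ioo_subset_Icc_self hu)).hasDerivAt (Icc_mem_nhds hu.1 hu.2)
      have hin : HasDerivAt (fun s : ℝ => b + s * (a - b)) (a - b) t := by
        simpa using ((hasDerivAt_id t).mul_const (a - b)).const_add b
      exact (hgat.comp t hin).hasDerivWithinAt
    have hgcont : ContinuousOn g (Set.Icc A B) := fun x hx => (hg x hx).continuousWithinAt
    have hcontG : ContinuousOn (fun s : ℝ => g (b + s * (a - b))) (Set.Icc 0 1) :=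
      hgcont.comp hcontAff.continuousOn hmem
    have hint : IntervalIntegrable (fun t : ℝ => ρ (b + t * (a - b)) * (a - b))
        MeasureTheory.volume 0 1 := by
      apply ContinuousOn.intervalIntegrable
      rw [Set.uIcc_of_le zero_le_one]
      exact hcontInt.mul continuousOn_const
    have key := intervalIntegral.integral_eq_sub_of_hasDeriv_right_of_le zero_le_one
      hcontG hder hint
    rw [intervalIntegral.integral_mul_const] at key
    have h1 : b + 1 * (a - b) = a := by ring
    have h0 : b + 0 * (a - b) = b := by ring
    rw [h1, h0] at key
    rw [← key, mul_div_cancel_right₀ _ (sub_ne_zero.2 hab)]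

lemma contInt {A B : ℝ} {ρ : ℝ → ℝ} (hρ : ContinuousOn ρ (Set.Icc A B)) {a b : ℝ}
    (ha : a ∈ Set.Icc A B) (hb : b ∈ Set.Icc A B) :
    ContinuousOn (fun t : ℝ => ρ (b + t * (a - b))) (Set.Icc 0 1) :=
  hρ.comp (by continuity : Continuous fun t : ℝ => b + t * (a - b)).continuousOn
    (fun t ht => affine_mem_Icc ha hb ht)

lemma dq_abs_le {A B : ℝ} {g ρ : ℝ → ℝ}
    (hg : ∀ x ∈ Set.Icc A B, HasDerivWithinAt g (ρ x) (Set.Icc A B) x)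
    (hρ : ContinuousOn ρ (Set.Icc A B)) {a b C : ℝ}
    (ha : a ∈ Set.Icc A B) (hb : b ∈ Set.Icc A B)
    (hC : ∀ t ∈ Set.Icc (0:ℝ) 1, |ρ (b + t * (a - b))| ≤ C) :
    |dq g ρ a b| ≤ C := by
  rw [dq_eq_integral hg hρ ha hb]
  have h := intervalIntegral.norm_integral_le_of_norm_le_const
    (C := C) (f := fun t : ℝ => ρ (b + t * (a - b))) (a := 0) (b := 1) ?_
  · simpa using h
  · intro t ht
    rw [Set.uIoc_of_le zero_le_one] at ht
    exact hC t ⟨ht.1.le, ht.2⟩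

lemma dq_lower {A B : ℝ} {g ρ : ℝ → ℝ}
    (hg : ∀ x ∈ Set.Icc A B, HasDerivWithinAt g (ρ x) (Set.Icc A B) x)
    (hρ : ContinuousOn ρ (Set.Icc A B)) {a b m : ℝ}
    (ha : a ∈ Set.Icc A B) (hb : b ∈ Set.Icc A B)
    (hm : ∀ x ∈ Set.Icc A B, m ≤ ρ x) : m ≤ dq g ρ a b := by
  rw [dq_eq_integral hg hρ ha hb]
  have h0 : m = ∫ _t in (0:ℝ)..1, m := by simp
  rw [h0]
  apply intervalIntegral.integral_mono_on zero_le_one intervalIntegrable_const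
  · apply ContinuousOn.intervalIntegrable
    rw [Set.uIcc_of_le zero_le_one]; exact contInt hρ ha hb
  · exact fun t ht => hm _ (affine_mem_Icc ha hb ht)

lemma dq_diff_le {A B : ℝ} {g ρ : ℝ → ℝ}
    (hg : ∀ x ∈ Set.Icc A B, HasDerivWithinAt g (ρ x) (Set.Icc A B) x)
    (hρ : ContinuousOn ρ (Set.Icc A B)) {a b c C : ℝ}
    (ha : a ∈ Set.Icc A B) (hb : b ∈ Set.Icc A B) (hc : c ∈ Set.Icc A B)
    (hC : ∀ t ∈ Set.Icc (0:ℝ) 1, |ρ (b + t * (a - b)) - ρ (b + t * (c - b))| ≤ C) :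
    |dq g ρ a b - dq g ρ c b| ≤ C := by
  rw [dq_eq_integral hg hρ ha hb, dq_eq_integral hg hρ hc hb]
  have i1 : IntervalIntegrable (fun t : ℝ => ρ (b + t * (a - b))) MeasureTheory.volume 0 1 := by
    apply ContinuousOn.intervalIntegrable
    rw [Set.uIcc_of_le zero_le_one]; exact contInt hρ ha hb
  have i2 : IntervalIntegrable (fun t : ℝ => ρ (b + t * (c - b))) MeasureTheory.volume 0 1 := by
    apply ContinuousOn.intervalIntegrable
    rw [Set.uIcc_of_le zero_le_one]; exact contInt hρ hc hb
  rw [← intervalIntegral.integral_sub i1 i2]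
  have h := intervalIntegral.norm_integral_le_of_norm_le_const
    (C := C) (f := fun t : ℝ => ρ (b + t * (a - b)) - ρ (b + t * (c - b))) (a := 0) (b := 1) ?_
  · simpa using h
  · intro t ht
    rw [Set.uIoc_of_le zero_le_one] at ht
    exact hC t ⟨ht.1.le, ht.2⟩

/-! ### Taylor remainder estimates -/

lemma taylor_step {A B H s : ℝ} (hAB : A ≤ B) (hs : 0 < s) (hH : 0 ≤ H)
    {θ : ℝ} (hθ : θ ∈ Set.Icc A B) {u v : ℝ → ℝ}
    (hv : ∀ x ∈ Set.Icc A B, HasDerivWithinAt v (u x) (Set.Icc A B) x)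
    (hvθ : v θ = 0)
    (hu : ∀ x ∈ Set.Icc A B, |u x| ≤ H * |x - θ| ^ s) :
    ∀ x ∈ Set.Icc A B, |v x| ≤ H * |x - θ| ^ (s + 1) := by
  intro x hx
  have hsub : Set.uIcc θ x ⊆ Set.Icc A B := uIcc_subset_Icc' hAB hθ hx
  have hconv : Convex ℝ (Set.uIcc θ x) := convex_uIcc θ x
  have key : ‖v x - v θ‖ ≤ (H * |x - θ| ^ s) * ‖x - θ‖ := by
    apply hconv.norm_image_sub_le_of_norm_hasDerivWithin_le
      (fun w hw => (hv w (hsub hw)).mono hsub) (fun w hw => ?_)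
      Set.left_mem_uIcc Set.right_mem_uIcc
    calc ‖u w‖ = |u w| := rfl
      _ ≤ H * |w - θ| ^ s := hu w (hsub hw)
      _ ≤ H * |x - θ| ^ s := by
          apply mul_le_mul_of_nonneg_left _ hH
          apply Real.rpow_le_rpow (abs_nonneg _) _ hs.le
          have h := abs_sub_le_of_mem_uIcc (θ := θ) hw
          simpa using h
  rw [hvθ, sub_zero] at key
  calc |v x| ≤ H * |x - θ| ^ s * |x - θ| := key
    _ = H * |x - θ| ^ (s + 1) := by
        rcases eq_or_ne (x - θ) 0 with h | h
        · rw [h]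
          simp [Real.zero_rpow hs.ne', Real.zero_rpow (by linarith : s + 1 ≠ 0)]
        · rw [Real.rpow_add_one (abs_ne_zero.2 h), mul_assoc]

/-! ### Taylor polynomials and algebraic identities -/

noncomputable def NB (c1 c2 c3 c4 θ a b : ℝ) : ℝ :=
  c1 + c2 * ((a - θ) + (b - θ)) / 2 +
    c3 * ((a - θ) ^ 2 + (a - θ) * (b - θ) + (b - θ) ^ 2) / 6 +
    c4 * ((a - θ) ^ 3 + (a - θ) ^ 2 * (b - θ) + (a - θ) * (b - θ) ^ 2 + (b - θ) ^ 3) / 24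

noncomputable def gP (f f1 f2 f3 f4 : ℝ → ℝ) (θ : ℝ) : ℝ → ℝ := fun x =>
  f x - (f θ + f1 θ * (x - θ) + f2 θ * (x - θ) ^ 2 / 2 + f3 θ * (x - θ) ^ 3 / 6 +
    f4 θ * (x - θ) ^ 4 / 24)

noncomputable def r0 (f1 f2 f3 f4 : ℝ → ℝ) (θ : ℝ) : ℝ → ℝ := fun x =>
  f1 x - (f1 θ + f2 θ * (x - θ) + f3 θ * (x - θ) ^ 2 / 2 + f4 θ * (x - θ) ^ 3 / 6)

noncomputable def r1 (f2 f3 f4 : ℝ → ℝ) (θ : ℝ) : ℝ → ℝ := fun x =>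
  f2 x - (f2 θ + f3 θ * (x - θ) + f4 θ * (x - θ) ^ 2 / 2)

noncomputable def r2 (f3 f4 : ℝ → ℝ) (θ : ℝ) : ℝ → ℝ := fun x =>
  f3 x - (f3 θ + f4 θ * (x - θ))

noncomputable def Wexpr (c1 c2 c3 c4 θ x₁ x₂ x₃ : ℝ) : ℝ :=
  let φ₁ := c2 / (2 * c1); let φ₂ := c3 / (6 * c1); let φ₃ := c4 / (24 * c1)
  let d₁ := x₁ - θ; let d₂ := x₂ - θ; let d₃ := x₃ - θ
  let q₁ := d₂ + d₃; let q₂ := d₂ ^ 2 + d₂ * d₃ + d₃ ^ 2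
  let q₃ := d₂ ^ 3 + d₂ ^ 2 * d₃ + d₂ * d₃ ^ 2 + d₃ ^ 3
  let S₁ := d₁ + d₂ + d₃
  let S₂ := d₁ ^ 2 + d₂ ^ 2 + d₃ ^ 2 + d₁ * d₂ + d₂ * d₃ + d₃ * d₁
  c1 * (-(φ₁ * φ₃ * q₃) - (φ₂ * S₁ - φ₁ ^ 2 * q₁) * (φ₂ * q₂ + φ₃ * q₃)
    - (φ₃ * S₂ - φ₁ * φ₂ * (q₂ + q₁ * S₁) + φ₁ ^ 3 * q₁ ^ 2)
      * (φ₁ * q₁ + φ₂ * q₂ + φ₃ * q₃))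

noncomputable def Kc (Φ D₀ : ℝ) : ℝ :=
  Φ ^ 2 * 4 + (Φ * 3 + Φ ^ 2 * 2) * (Φ * 3 + Φ * 4 * D₀)
    + (Φ * 6 + Φ ^ 2 * 9 + Φ ^ 3 * 4) * (Φ * 2 + Φ * 3 * D₀ + Φ * 4 * D₀ ^ 2)

noncomputable def KQ (Φ D₀ : ℝ) : ℝ :=
  Φ + (Φ * 3 + Φ ^ 2 * 2) * D₀ + (Φ * 6 + Φ ^ 2 * 9 + Φ ^ 3 * 4) * D₀ ^ 2

set_option maxHeartbeats 1000000 in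
lemma NB_Q_identity (f1 f2 f3 f4 : ℝ → ℝ) (θ x₁ x₂ x₃ : ℝ) (hc1 : f1 θ ≠ 0) :
    NB (f1 θ) (f2 θ) (f3 θ) (f4 θ) θ x₁ x₂ -
      NB (f1 θ) (f2 θ) (f3 θ) (f4 θ) θ x₂ x₃ -
      (x₁ - x₃) * Qexpr f1 f2 f3 f4 θ x₁ x₂ x₃ *
        NB (f1 θ) (f2 θ) (f3 θ) (f4 θ) θ x₂ x₃ =
    (x₁ - x₃) * Wexpr (f1 θ) (f2 θ) (f3 θ) (f4 θ) θ x₁ x₂ x₃ := by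
  simp only [NB, Qexpr, Wexpr]
  field_simp
  ring

section Derivs
variable {A B : ℝ} {f f1 f2 f3 f4 : ℝ → ℝ} (θ : ℝ)

lemma r2_deriv (hf4 : ∀ x ∈ Set.Icc A B, HasDerivWithinAt f3 (f4 x) (Set.Icc A B) x) :
    ∀ x ∈ Set.Icc A B, HasDerivWithinAt (r2 f3 f4 θ) (f4 x - f4 θ) (Set.Icc A B) x := by
  intro x hx
  have h1 : HasDerivAt (fun y : ℝ => f3 θ + f4 θ * (y - θ)) (f4 θ) x := by
    simpa using (((hasDerivAt_id x).sub_const θ).const_mul (f4 θ)).const_add (f3 θ)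
  exact (hf4 x hx).sub h1.hasDerivWithinAt

lemma r1_deriv (hf3 : ∀ x ∈ Set.Icc A B, HasDerivWithinAt f2 (f3 x) (Set.Icc A B) x) :
    ∀ x ∈ Set.Icc A B, HasDerivWithinAt (r1 f2 f3 f4 θ) (r2 f3 f4 θ x) (Set.Icc A B) x := by
  intro x hx
  have hb : HasDerivAt (fun y : ℝ => y - θ) 1 x := (hasDerivAt_id x).sub_const θ
  have h2 : HasDerivAt (fun y : ℝ => (y - θ) ^ 2) (2 * (x - θ)) x := by simpa using hb.fun_pow 2
  have h1 : HasDerivAt (fun y : ℝ => f2 θ + f3 θ * (y - θ) + f4 θ * (y - θ) ^ 2 / 2)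
      (f3 θ + f4 θ * (x - θ)) x := by
    have := ((hb.const_mul (f3 θ)).const_add (f2 θ)).fun_add ((h2.const_mul (f4 θ)).div_const 2)
    exact this.congr_deriv (by ring)
  have := (hf3 x hx).fun_sub h1.hasDerivWithinAt
  exact this

lemma r0_deriv (hf2 : ∀ x ∈ Set.Icc A B, HasDerivWithinAt f1 (f2 x) (Set.Icc A B) x) :
    ∀ x ∈ Set.Icc A B, HasDerivWithinAt (r0 f1 f2 f3 f4 θ) (r1 f2 f3 f4 θ x) (Set.Icc A B) x := by
  intro x hx
  have hb : HasDerivAt (fun y : ℝ => y - θ) 1 x := (hasDerivAt_id x).sub_const θ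
  have h2 : HasDerivAt (fun y : ℝ => (y - θ) ^ 2) (2 * (x - θ)) x := by simpa using hb.fun_pow 2
  have h3 : HasDerivAt (fun y : ℝ => (y - θ) ^ 3) (3 * (x - θ) ^ 2) x := by simpa using hb.fun_pow 3
  have h1 : HasDerivAt
      (fun y : ℝ => f1 θ + f2 θ * (y - θ) + f3 θ * (y - θ) ^ 2 / 2 + f4 θ * (y - θ) ^ 3 / 6)
      (f2 θ + f3 θ * (x - θ) + f4 θ * (x - θ) ^ 2 / 2) x := by
    have := (((hb.const_mul (f2 θ)).const_add (f1 θ)).fun_add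
      ((h2.const_mul (f3 θ)).div_const 2)).fun_add ((h3.const_mul (f4 θ)).div_const 6)
    exact this.congr_deriv (by ring)
  have := (hf2 x hx).fun_sub h1.hasDerivWithinAt
  exact this

lemma gP_deriv (hf1 : ∀ x ∈ Set.Icc A B, HasDerivWithinAt f (f1 x) (Set.Icc A B) x) :
    ∀ x ∈ Set.Icc A B, HasDerivWithinAt (gP f f1 f2 f3 f4 θ) (r0 f1 f2 f3 f4 θ x)
      (Set.Icc A B) x := by
  intro x hx
  have hb : HasDerivAt (fun y : ℝ => y - θ) 1 x := (hasDerivAt_id x).sub_const θ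
  have h2 : HasDerivAt (fun y : ℝ => (y - θ) ^ 2) (2 * (x - θ)) x := by simpa using hb.fun_pow 2
  have h3 : HasDerivAt (fun y : ℝ => (y - θ) ^ 3) (3 * (x - θ) ^ 2) x := by simpa using hb.fun_pow 3
  have h4 : HasDerivAt (fun y : ℝ => (y - θ) ^ 4) (4 * (x - θ) ^ 3) x := by simpa using hb.fun_pow 4
  have h1 : HasDerivAt
      (fun y : ℝ => f θ + f1 θ * (y - θ) + f2 θ * (y - θ) ^ 2 / 2 + f3 θ * (y - θ) ^ 3 / 6 +
        f4 θ * (y - θ) ^ 4 / 24)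
      (f1 θ + f2 θ * (x - θ) + f3 θ * (x - θ) ^ 2 / 2 + f4 θ * (x - θ) ^ 3 / 6) x := by
    have := ((((hb.const_mul (f1 θ)).const_add (f θ)).fun_add
      ((h2.const_mul (f2 θ)).div_const 2)).fun_add ((h3.const_mul (f3 θ)).div_const 6)).fun_add
      ((h4.const_mul (f4 θ)).div_const 24)
    exact this.congr_deriv (by ring)
  have := (hf1 x hx).fun_sub h1.hasDerivWithinAt
  exact this

lemma Edec (f f1 f2 f3 f4 : ℝ → ℝ) (θ a b : ℝ) :
    dq f f1 a b = NB (f1 θ) (f2 θ) (f3 θ) (f4 θ) θ a b +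
      dq (gP f f1 f2 f3 f4 θ) (r0 f1 f2 f3 f4 θ) a b := by
  by_cases hab : a = b
  · subst hab
    simp only [dq, if_pos rfl, if_true, NB, r0]
    ring
  · simp only [dq, if_neg hab]
    have hne := sub_ne_zero.2 hab
    have key : (f a - f b) - (gP f f1 f2 f3 f4 θ a - gP f f1 f2 f3 f4 θ b) =
        NB (f1 θ) (f2 θ) (f3 θ) (f4 θ) θ a b * (a - b) := by
      simp only [gP, NB]; ring
    calc (f a - f b) / (a - b)
        = ((f a - f b) - (gP f f1 f2 f3 f4 θ a - gP f f1 f2 f3 f4 θ b)) / (a - b) +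
          (gP f f1 f2 f3 f4 θ a - gP f f1 f2 f3 f4 θ b) / (a - b) := by
          rw [← add_div, sub_add_cancel]
      _ = NB (f1 θ) (f2 θ) (f3 θ) (f4 θ) θ a b +
          (gP f f1 f2 f3 f4 θ a - gP f f1 f2 f3 f4 θ b) / (a - b) := by
          rw [key, mul_div_cancel_right₀ _ hne]

end Derivs

/-! ### Polynomial bounds -/

section Bounds
variable {φ₁ φ₂ φ₃ d₁ d₂ d₃ Δ Φ D₀ : ℝ}

lemma q1_bound (hd2 : |d₂| ≤ Δ) (hd3 : |d₃| ≤ Δ) : |d₂ + d₃| ≤ 2 * Δ :=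
  (abs_add_le _ _).trans (by linarith)

lemma q2_bound (hd2 : |d₂| ≤ Δ) (hd3 : |d₃| ≤ Δ) (hΔ : 0 ≤ Δ) :
    |d₂ ^ 2 + d₂ * d₃ + d₃ ^ 2| ≤ 3 * Δ ^ 2 := by
  have a1 : |d₂ ^ 2| ≤ Δ ^ 2 := by rw [abs_pow]; exact pow_le_pow_left₀ (abs_nonneg _) hd2 2
  have a3 : |d₃ ^ 2| ≤ Δ ^ 2 := by rw [abs_pow]; exact pow_le_pow_left₀ (abs_nonneg _) hd3 2
  have a2 : |d₂ * d₃| ≤ Δ ^ 2 := by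
    rw [abs_mul, sq]; exact mul_le_mul hd2 hd3 (abs_nonneg _) hΔ
  have t1 := abs_add_le (d₂ ^ 2 + d₂ * d₃) (d₃ ^ 2)
  have t2 := abs_add_le (d₂ ^ 2) (d₂ * d₃)
  linarith

lemma q3_bound (hd2 : |d₂| ≤ Δ) (hd3 : |d₃| ≤ Δ) (hΔ : 0 ≤ Δ) :
    |d₂ ^ 3 + d₂ ^ 2 * d₃ + d₂ * d₃ ^ 2 + d₃ ^ 3| ≤ 4 * Δ ^ 3 := by
  have a1 : |d₂ ^ 3| ≤ Δ ^ 3 := by rw [abs_pow]; exact pow_le_pow_left₀ (abs_nonneg _) hd2 3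
  have a4 : |d₃ ^ 3| ≤ Δ ^ 3 := by rw [abs_pow]; exact pow_le_pow_left₀ (abs_nonneg _) hd3 3
  have a2 : |d₂ ^ 2 * d₃| ≤ Δ ^ 3 := by
    rw [abs_mul, abs_pow]
    nlinarith [abs_nonneg d₂, abs_nonneg d₃, pow_nonneg (abs_nonneg d₂) 2,
      mul_le_mul (pow_le_pow_left₀ (abs_nonneg d₂) hd2 2) hd3 (abs_nonneg d₃)
        (pow_nonneg hΔ 2)]
  have a3 : |d₂ * d₃ ^ 2| ≤ Δ ^ 3 := by
    rw [abs_mul, abs_pow]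
    nlinarith [abs_nonneg d₂, abs_nonneg d₃,
      mul_le_mul hd2 (pow_le_pow_left₀ (abs_nonneg d₃) hd3 2) (pow_nonneg (abs_nonneg d₃) 2) hΔ]
  have t1 := abs_add_le (d₂ ^ 3 + d₂ ^ 2 * d₃ + d₂ * d₃ ^ 2) (d₃ ^ 3)
  have t2 := abs_add_le (d₂ ^ 3 + d₂ ^ 2 * d₃) (d₂ * d₃ ^ 2)
  have t3 := abs_add_le (d₂ ^ 3) (d₂ ^ 2 * d₃)
  linarith

lemma S1_bound (hd1 : |d₁| ≤ Δ) (hd2 : |d₂| ≤ Δ) (hd3 : |d₃| ≤ Δ) :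
    |d₁ + d₂ + d₃| ≤ 3 * Δ := by
  have t1 := abs_add_le (d₁ + d₂) d₃
  have t2 := abs_add_le d₁ d₂
  linarith

lemma S2_bound (hd1 : |d₁| ≤ Δ) (hd2 : |d₂| ≤ Δ) (hd3 : |d₃| ≤ Δ) (hΔ : 0 ≤ Δ) :
    |d₁ ^ 2 + d₂ ^ 2 + d₃ ^ 2 + d₁ * d₂ + d₂ * d₃ + d₃ * d₁| ≤ 6 * Δ ^ 2 := by
  have a1 : |d₁ ^ 2| ≤ Δ ^ 2 := by rw [abs_pow]; exact pow_le_pow_left₀ (abs_nonneg _) hd1 2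
  have a2 : |d₂ ^ 2| ≤ Δ ^ 2 := by rw [abs_pow]; exact pow_le_pow_left₀ (abs_nonneg _) hd2 2
  have a3 : |d₃ ^ 2| ≤ Δ ^ 2 := by rw [abs_pow]; exact pow_le_pow_left₀ (abs_nonneg _) hd3 2
  have b1 : |d₁ * d₂| ≤ Δ ^ 2 := by
    rw [abs_mul, sq]; exact mul_le_mul hd1 hd2 (abs_nonneg _) hΔ
  have b2 : |d₂ * d₃| ≤ Δ ^ 2 := by
    rw [abs_mul, sq]; exact mul_le_mul hd2 hd3 (abs_nonneg _) hΔ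
  have b3 : |d₃ * d₁| ≤ Δ ^ 2 := by
    rw [abs_mul, sq]; exact mul_le_mul hd3 hd1 (abs_nonneg _) hΔ
  have t1 := abs_add_le (d₁ ^ 2 + d₂ ^ 2 + d₃ ^ 2 + d₁ * d₂ + d₂ * d₃) (d₃ * d₁)
  have t2 := abs_add_le (d₁ ^ 2 + d₂ ^ 2 + d₃ ^ 2 + d₁ * d₂) (d₂ * d₃)
  have t3 := abs_add_le (d₁ ^ 2 + d₂ ^ 2 + d₃ ^ 2) (d₁ * d₂)
  have t4 := abs_add_le (d₁ ^ 2 + d₂ ^ 2) (d₃ ^ 2)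
  have t5 := abs_add_le (d₁ ^ 2) (d₂ ^ 2)
  linarith

lemma A1_bound (hφ1 : |φ₁| ≤ Φ) (hφ2 : |φ₂| ≤ Φ) (hΦ : 0 ≤ Φ)
    (hd1 : |d₁| ≤ Δ) (hd2 : |d₂| ≤ Δ) (hd3 : |d₃| ≤ Δ) :
    |φ₂ * (d₁ + d₂ + d₃) - φ₁ ^ 2 * (d₂ + d₃)| ≤ (Φ * 3 + Φ ^ 2 * 2) * Δ := by
  have h1 : |φ₂ * (d₁ + d₂ + d₃)| ≤ Φ * (3 * Δ) := by
    rw [abs_mul]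
    exact mul_le_mul hφ2 (S1_bound hd1 hd2 hd3) (abs_nonneg _) hΦ
  have h2 : |φ₁ ^ 2 * (d₂ + d₃)| ≤ Φ ^ 2 * (2 * Δ) := by
    rw [abs_mul, abs_pow]
    exact mul_le_mul (pow_le_pow_left₀ (abs_nonneg _) hφ1 2) (q1_bound hd2 hd3)
      (abs_nonneg _) (pow_nonneg hΦ 2)
  calc |φ₂ * (d₁ + d₂ + d₃) - φ₁ ^ 2 * (d₂ + d₃)|
      ≤ |φ₂ * (d₁ + d₂ + d₃)| + |φ₁ ^ 2 * (d₂ + d₃)| := abs_sub _ _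
    _ ≤ (Φ * 3 + Φ ^ 2 * 2) * Δ := by linarith

lemma A2_bound (hφ1 : |φ₁| ≤ Φ) (hφ2 : |φ₂| ≤ Φ) (hφ3 : |φ₃| ≤ Φ) (hΦ : 0 ≤ Φ)
    (hd1 : |d₁| ≤ Δ) (hd2 : |d₂| ≤ Δ) (hd3 : |d₃| ≤ Δ) (hΔ : 0 ≤ Δ) :
    |φ₃ * (d₁ ^ 2 + d₂ ^ 2 + d₃ ^ 2 + d₁ * d₂ + d₂ * d₃ + d₃ * d₁) -
      φ₁ * φ₂ * ((d₂ ^ 2 + d₂ * d₃ + d₃ ^ 2) + (d₂ + d₃) * (d₁ + d₂ + d₃)) +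
      φ₁ ^ 3 * (d₂ + d₃) ^ 2| ≤ (Φ * 6 + Φ ^ 2 * 9 + Φ ^ 3 * 4) * Δ ^ 2 := by
  have h1 : |φ₃ * (d₁ ^ 2 + d₂ ^ 2 + d₃ ^ 2 + d₁ * d₂ + d₂ * d₃ + d₃ * d₁)| ≤ Φ * (6 * Δ ^ 2) := by
    rw [abs_mul]
    exact mul_le_mul hφ3 (S2_bound hd1 hd2 hd3 hΔ) (abs_nonneg _) hΦ
  have h2 : |φ₁ * φ₂ * ((d₂ ^ 2 + d₂ * d₃ + d₃ ^ 2) + (d₂ + d₃) * (d₁ + d₂ + d₃))|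
      ≤ Φ ^ 2 * (9 * Δ ^ 2) := by
    rw [abs_mul]
    have hφ : |φ₁ * φ₂| ≤ Φ ^ 2 := by
      rw [abs_mul, sq]; exact mul_le_mul hφ1 hφ2 (abs_nonneg _) hΦ
    have hin : |(d₂ ^ 2 + d₂ * d₃ + d₃ ^ 2) + (d₂ + d₃) * (d₁ + d₂ + d₃)| ≤ 9 * Δ ^ 2 := by
      have t0 := abs_add_le (d₂ ^ 2 + d₂ * d₃ + d₃ ^ 2) ((d₂ + d₃) * (d₁ + d₂ + d₃))
      have t1 : |(d₂ + d₃) * (d₁ + d₂ + d₃)| ≤ 2 * Δ * (3 * Δ) := by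
        rw [abs_mul]
        exact mul_le_mul (q1_bound hd2 hd3) (S1_bound hd1 hd2 hd3) (abs_nonneg _)
          (by linarith)
      have t2 := q2_bound hd2 hd3 hΔ
      nlinarith
    exact mul_le_mul hφ hin (abs_nonneg _) (pow_nonneg hΦ 2)
  have h3 : |φ₁ ^ 3 * (d₂ + d₃) ^ 2| ≤ Φ ^ 3 * (4 * Δ ^ 2) := by
    rw [abs_mul, abs_pow, abs_pow]
    have hq : |d₂ + d₃| ^ 2 ≤ 4 * Δ ^ 2 := by
      nlinarith [q1_bound hd2 hd3, abs_nonneg (d₂ + d₃)]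
    exact mul_le_mul (pow_le_pow_left₀ (abs_nonneg _) hφ1 3) hq (pow_nonneg (abs_nonneg _) 2)
      (pow_nonneg hΦ 3)
  have t1 := abs_add_le (φ₃ * (d₁ ^ 2 + d₂ ^ 2 + d₃ ^ 2 + d₁ * d₂ + d₂ * d₃ + d₃ * d₁) -
      φ₁ * φ₂ * ((d₂ ^ 2 + d₂ * d₃ + d₃ ^ 2) + (d₂ + d₃) * (d₁ + d₂ + d₃)))
      (φ₁ ^ 3 * (d₂ + d₃) ^ 2)
  have t2 := abs_sub (φ₃ * (d₁ ^ 2 + d₂ ^ 2 + d₃ ^ 2 + d₁ * d₂ + d₂ * d₃ + d₃ * d₁))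
      (φ₁ * φ₂ * ((d₂ ^ 2 + d₂ * d₃ + d₃ ^ 2) + (d₂ + d₃) * (d₁ + d₂ + d₃)))
  nlinarith

lemma B1_bound (hφ2 : |φ₂| ≤ Φ) (hφ3 : |φ₃| ≤ Φ) (hΦ : 0 ≤ Φ)
    (hd2 : |d₂| ≤ Δ) (hd3 : |d₃| ≤ Δ) (hΔ : 0 ≤ Δ) (hΔD : Δ ≤ D₀) :
    |φ₂ * (d₂ ^ 2 + d₂ * d₃ + d₃ ^ 2) +
      φ₃ * (d₂ ^ 3 + d₂ ^ 2 * d₃ + d₂ * d₃ ^ 2 + d₃ ^ 3)| ≤ (Φ * 3 + Φ * 4 * D₀) * Δ ^ 2 := by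
  have h1 : |φ₂ * (d₂ ^ 2 + d₂ * d₃ + d₃ ^ 2)| ≤ Φ * (3 * Δ ^ 2) := by
    rw [abs_mul]; exact mul_le_mul hφ2 (q2_bound hd2 hd3 hΔ) (abs_nonneg _) hΦ
  have h2 : |φ₃ * (d₂ ^ 3 + d₂ ^ 2 * d₃ + d₂ * d₃ ^ 2 + d₃ ^ 3)| ≤ Φ * (4 * Δ ^ 3) := by
    rw [abs_mul]; exact mul_le_mul hφ3 (q3_bound hd2 hd3 hΔ) (abs_nonneg _) hΦ
  have t := abs_add_le (φ₂ * (d₂ ^ 2 + d₂ * d₃ + d₃ ^ 2))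
    (φ₃ * (d₂ ^ 3 + d₂ ^ 2 * d₃ + d₂ * d₃ ^ 2 + d₃ ^ 3))
  have k1 : 0 ≤ Φ * Δ ^ 2 * (D₀ - Δ) := mul_nonneg (mul_nonneg hΦ (pow_nonneg hΔ 2)) (by linarith)
  nlinarith [k1]

lemma B2_bound (hφ1 : |φ₁| ≤ Φ) (hφ2 : |φ₂| ≤ Φ) (hφ3 : |φ₃| ≤ Φ) (hΦ : 0 ≤ Φ)
    (hd2 : |d₂| ≤ Δ) (hd3 : |d₃| ≤ Δ) (hΔ : 0 ≤ Δ) (hΔD : Δ ≤ D₀) :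
    |φ₁ * (d₂ + d₃) + φ₂ * (d₂ ^ 2 + d₂ * d₃ + d₃ ^ 2) +
      φ₃ * (d₂ ^ 3 + d₂ ^ 2 * d₃ + d₂ * d₃ ^ 2 + d₃ ^ 3)|
      ≤ (Φ * 2 + Φ * 3 * D₀ + Φ * 4 * D₀ ^ 2) * Δ := by
  have h1 : |φ₁ * (d₂ + d₃)| ≤ Φ * (2 * Δ) := by
    rw [abs_mul]; exact mul_le_mul hφ1 (q1_bound hd2 hd3) (abs_nonneg _) hΦ
  have h2 : |φ₂ * (d₂ ^ 2 + d₂ * d₃ + d₃ ^ 2)| ≤ Φ * (3 * Δ ^ 2) := by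
    rw [abs_mul]; exact mul_le_mul hφ2 (q2_bound hd2 hd3 hΔ) (abs_nonneg _) hΦ
  have h3 : |φ₃ * (d₂ ^ 3 + d₂ ^ 2 * d₃ + d₂ * d₃ ^ 2 + d₃ ^ 3)| ≤ Φ * (4 * Δ ^ 3) := by
    rw [abs_mul]; exact mul_le_mul hφ3 (q3_bound hd2 hd3 hΔ) (abs_nonneg _) hΦ
  have t1 := abs_add_le (φ₁ * (d₂ + d₃) + φ₂ * (d₂ ^ 2 + d₂ * d₃ + d₃ ^ 2))
    (φ₃ * (d₂ ^ 3 + d₂ ^ 2 * d₃ + d₂ * d₃ ^ 2 + d₃ ^ 3))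
  have t2 := abs_add_le (φ₁ * (d₂ + d₃)) (φ₂ * (d₂ ^ 2 + d₂ * d₃ + d₃ ^ 2))
  have k1 : 0 ≤ Φ * Δ * (D₀ - Δ) := mul_nonneg (mul_nonneg hΦ hΔ) (by linarith)
  have k2 : 0 ≤ Φ * Δ * (D₀ ^ 2 - Δ ^ 2) := mul_nonneg (mul_nonneg hΦ hΔ) (by nlinarith)
  nlinarith [k1, k2]

set_option maxHeartbeats 1000000 in
lemma core_bound (hφ1 : |φ₁| ≤ Φ) (hφ2 : |φ₂| ≤ Φ) (hφ3 : |φ₃| ≤ Φ) (hΦ : 0 ≤ Φ)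
    (hd1 : |d₁| ≤ Δ) (hd2 : |d₂| ≤ Δ) (hd3 : |d₃| ≤ Δ) (hΔ : 0 ≤ Δ) (hΔD : Δ ≤ D₀) :
    |(-(φ₁ * φ₃ * (d₂ ^ 3 + d₂ ^ 2 * d₃ + d₂ * d₃ ^ 2 + d₃ ^ 3))
      - (φ₂ * (d₁ + d₂ + d₃) - φ₁ ^ 2 * (d₂ + d₃)) *
          (φ₂ * (d₂ ^ 2 + d₂ * d₃ + d₃ ^ 2) +
            φ₃ * (d₂ ^ 3 + d₂ ^ 2 * d₃ + d₂ * d₃ ^ 2 + d₃ ^ 3))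
      - (φ₃ * (d₁ ^ 2 + d₂ ^ 2 + d₃ ^ 2 + d₁ * d₂ + d₂ * d₃ + d₃ * d₁) -
            φ₁ * φ₂ * ((d₂ ^ 2 + d₂ * d₃ + d₃ ^ 2) + (d₂ + d₃) * (d₁ + d₂ + d₃)) +
            φ₁ ^ 3 * (d₂ + d₃) ^ 2) *
          (φ₁ * (d₂ + d₃) + φ₂ * (d₂ ^ 2 + d₂ * d₃ + d₃ ^ 2) +
            φ₃ * (d₂ ^ 3 + d₂ ^ 2 * d₃ + d₂ * d₃ ^ 2 + d₃ ^ 3)))|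
    ≤ Kc Φ D₀ * Δ ^ 3 := by
  have hD0 : 0 ≤ D₀ := le_trans hΔ hΔD
  have h1 : |φ₁ * φ₃ * (d₂ ^ 3 + d₂ ^ 2 * d₃ + d₂ * d₃ ^ 2 + d₃ ^ 3)| ≤ Φ ^ 2 * 4 * Δ ^ 3 := by
    rw [abs_mul]
    have hp : |φ₁ * φ₃| ≤ Φ ^ 2 := by
      rw [abs_mul, sq]; exact mul_le_mul hφ1 hφ3 (abs_nonneg _) hΦ
    calc |φ₁ * φ₃| * |d₂ ^ 3 + d₂ ^ 2 * d₃ + d₂ * d₃ ^ 2 + d₃ ^ 3|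
        ≤ Φ ^ 2 * (4 * Δ ^ 3) := mul_le_mul hp (q3_bound hd2 hd3 hΔ) (abs_nonneg _)
          (pow_nonneg hΦ 2)
      _ = Φ ^ 2 * 4 * Δ ^ 3 := by ring
  have h2 : |(φ₂ * (d₁ + d₂ + d₃) - φ₁ ^ 2 * (d₂ + d₃)) *
      (φ₂ * (d₂ ^ 2 + d₂ * d₃ + d₃ ^ 2) + φ₃ * (d₂ ^ 3 + d₂ ^ 2 * d₃ + d₂ * d₃ ^ 2 + d₃ ^ 3))|
      ≤ (Φ * 3 + Φ ^ 2 * 2) * (Φ * 3 + Φ * 4 * D₀) * Δ ^ 3 := by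
    rw [abs_mul]
    calc _ ≤ ((Φ * 3 + Φ ^ 2 * 2) * Δ) * ((Φ * 3 + Φ * 4 * D₀) * Δ ^ 2) :=
          mul_le_mul (A1_bound hφ1 hφ2 hΦ hd1 hd2 hd3) (B1_bound hφ2 hφ3 hΦ hd2 hd3 hΔ hΔD)
            (abs_nonneg _) (mul_nonneg (by nlinarith) hΔ)
      _ = (Φ * 3 + Φ ^ 2 * 2) * (Φ * 3 + Φ * 4 * D₀) * Δ ^ 3 := by ring
  have h3 : |(φ₃ * (d₁ ^ 2 + d₂ ^ 2 + d₃ ^ 2 + d₁ * d₂ + d₂ * d₃ + d₃ * d₁) -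
        φ₁ * φ₂ * ((d₂ ^ 2 + d₂ * d₃ + d₃ ^ 2) + (d₂ + d₃) * (d₁ + d₂ + d₃)) +
        φ₁ ^ 3 * (d₂ + d₃) ^ 2) *
      (φ₁ * (d₂ + d₃) + φ₂ * (d₂ ^ 2 + d₂ * d₃ + d₃ ^ 2) +
        φ₃ * (d₂ ^ 3 + d₂ ^ 2 * d₃ + d₂ * d₃ ^ 2 + d₃ ^ 3))|
      ≤ (Φ * 6 + Φ ^ 2 * 9 + Φ ^ 3 * 4) * (Φ * 2 + Φ * 3 * D₀ + Φ * 4 * D₀ ^ 2) * Δ ^ 3 := by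
    rw [abs_mul]
    calc _ ≤ ((Φ * 6 + Φ ^ 2 * 9 + Φ ^ 3 * 4) * Δ ^ 2) *
          ((Φ * 2 + Φ * 3 * D₀ + Φ * 4 * D₀ ^ 2) * Δ) :=
          mul_le_mul (A2_bound hφ1 hφ2 hφ3 hΦ hd1 hd2 hd3 hΔ)
            (B2_bound hφ1 hφ2 hφ3 hΦ hd2 hd3 hΔ hΔD) (abs_nonneg _)
            (mul_nonneg (by nlinarith) (pow_nonneg hΔ 2))
      _ = _ := by ring
  set X := φ₁ * φ₃ * (d₂ ^ 3 + d₂ ^ 2 * d₃ + d₂ * d₃ ^ 2 + d₃ ^ 3) with hX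
  set Y := (φ₂ * (d₁ + d₂ + d₃) - φ₁ ^ 2 * (d₂ + d₃)) *
      (φ₂ * (d₂ ^ 2 + d₂ * d₃ + d₃ ^ 2) + φ₃ * (d₂ ^ 3 + d₂ ^ 2 * d₃ + d₂ * d₃ ^ 2 + d₃ ^ 3))
    with hY
  set Z := (φ₃ * (d₁ ^ 2 + d₂ ^ 2 + d₃ ^ 2 + d₁ * d₂ + d₂ * d₃ + d₃ * d₁) -
        φ₁ * φ₂ * ((d₂ ^ 2 + d₂ * d₃ + d₃ ^ 2) + (d₂ + d₃) * (d₁ + d₂ + d₃)) +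
        φ₁ ^ 3 * (d₂ + d₃) ^ 2) *
      (φ₁ * (d₂ + d₃) + φ₂ * (d₂ ^ 2 + d₂ * d₃ + d₃ ^ 2) +
        φ₃ * (d₂ ^ 3 + d₂ ^ 2 * d₃ + d₂ * d₃ ^ 2 + d₃ ^ 3)) with hZ
  have t1 := abs_sub (-X - Y) Z
  have t2 := abs_sub (-X) Y
  have t3 : |(-X)| = |X| := abs_neg X
  simp only [Kc]
  nlinarith [t1, t2, t3, h1, h2, h3]

lemma Qcore_bound (hφ1 : |φ₁| ≤ Φ) (hφ2 : |φ₂| ≤ Φ) (hφ3 : |φ₃| ≤ Φ) (hΦ : 0 ≤ Φ)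
    (hd1 : |d₁| ≤ Δ) (hd2 : |d₂| ≤ Δ) (hd3 : |d₃| ≤ Δ) (hΔ : 0 ≤ Δ) :
    |φ₁ + (φ₂ * (d₁ + d₂ + d₃) - φ₁ ^ 2 * (d₂ + d₃)) +
      (φ₃ * (d₁ ^ 2 + d₂ ^ 2 + d₃ ^ 2 + d₁ * d₂ + d₂ * d₃ + d₃ * d₁) -
        φ₁ * φ₂ * ((d₂ ^ 2 + d₂ * d₃ + d₃ ^ 2) + (d₂ + d₃) * (d₁ + d₂ + d₃)) +
        φ₁ ^ 3 * (d₂ + d₃) ^ 2)| ≤ KQ Φ Δ := by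
  have t1 := abs_add_le (φ₁ + (φ₂ * (d₁ + d₂ + d₃) - φ₁ ^ 2 * (d₂ + d₃)))
      (φ₃ * (d₁ ^ 2 + d₂ ^ 2 + d₃ ^ 2 + d₁ * d₂ + d₂ * d₃ + d₃ * d₁) -
        φ₁ * φ₂ * ((d₂ ^ 2 + d₂ * d₃ + d₃ ^ 2) + (d₂ + d₃) * (d₁ + d₂ + d₃)) +
        φ₁ ^ 3 * (d₂ + d₃) ^ 2)
  have t2 := abs_add_le φ₁ (φ₂ * (d₁ + d₂ + d₃) - φ₁ ^ 2 * (d₂ + d₃))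
  have h1 := A1_bound hφ1 hφ2 hΦ hd1 hd2 hd3
  have h2 := A2_bound hφ1 hφ2 hφ3 hΦ hd1 hd2 hd3 hΔ
  simp only [KQ]
  linarith

end Bounds

lemma phi_bound {m M c ck k : ℝ} (hm : 0 < m) (hc : m ≤ c) (hck : |ck| ≤ M) (hk : 2 ≤ k) :
    |ck / (k * c)| ≤ M / (2 * m) := by
  have hM : 0 ≤ M := (abs_nonneg _).trans hck
  have hkc : 2 * m ≤ |k * c| := by
    rw [abs_of_pos (by nlinarith : (0:ℝ) < k * c)]
    nlinarith
  rw [abs_div]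
  exact div_le_div₀ hM hck (by linarith) hkc

lemma Kc_nonneg {Φ D₀ : ℝ} (hΦ : 0 ≤ Φ) (hD : 0 ≤ D₀) : 0 ≤ Kc Φ D₀ := by
  have h2 := pow_nonneg hΦ 2
  have h3 := pow_nonneg hΦ 3
  have hD2 := pow_nonneg hD 2
  simp only [Kc]
  nlinarith [mul_nonneg hΦ hD, mul_nonneg h2 hD, mul_nonneg h3 hD, mul_nonneg hΦ hD2,
    mul_nonneg h2 hD2, mul_nonneg h3 hD2, mul_nonneg (mul_nonneg hΦ hΦ) hD]
  -- fallback

lemma KQ_nonneg {Φ D₀ : ℝ} (hΦ : 0 ≤ Φ) (hD : 0 ≤ D₀) : 0 ≤ KQ Φ D₀ := by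
  have h2 := pow_nonneg hΦ 2
  have h3 := pow_nonneg hΦ 3
  have hD2 := pow_nonneg hD 2
  simp only [KQ]
  nlinarith [mul_nonneg hΦ hD, mul_nonneg h2 hD, mul_nonneg h3 hD, mul_nonneg hΦ hD2,
    mul_nonneg h2 hD2, mul_nonneg h3 hD2]

lemma Wexpr_bound {c1 c2 c3 c4 θ x₁ x₂ x₃ Δ M m D₀ : ℝ}
    (hm : 0 < m) (hc1l : m ≤ c1) (hc1 : |c1| ≤ M) (hc2 : |c2| ≤ M) (hc3 : |c3| ≤ M)
    (hc4 : |c4| ≤ M) (hΔ : 0 ≤ Δ) (hΔD : Δ ≤ D₀)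
    (hd1 : |x₁ - θ| ≤ Δ) (hd2 : |x₂ - θ| ≤ Δ) (hd3 : |x₃ - θ| ≤ Δ) :
    |Wexpr c1 c2 c3 c4 θ x₁ x₂ x₃| ≤ M * (Kc (M / (2 * m)) D₀ * Δ ^ 3) := by
  have hM : 0 ≤ M := (abs_nonneg _).trans hc1
  have hΦ : 0 ≤ M / (2 * m) := div_nonneg hM (by linarith)
  have hφ1 : |c2 / (2 * c1)| ≤ M / (2 * m) := phi_bound hm hc1l hc2 le_rfl
  have hφ2 : |c3 / (6 * c1)| ≤ M / (2 * m) := phi_bound hm hc1l hc3 (by norm_num)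
  have hφ3 : |c4 / (24 * c1)| ≤ M / (2 * m) := phi_bound hm hc1l hc4 (by norm_num)
  have hcore := core_bound hφ1 hφ2 hφ3 hΦ hd1 hd2 hd3 hΔ hΔD
  simp only [Wexpr]
  rw [abs_mul]
  exact mul_le_mul hc1 hcore (abs_nonneg _) hM

lemma Qexpr_bound (f1 f2 f3 f4 : ℝ → ℝ) {θ x₁ x₂ x₃ M m D₀ : ℝ}
    (hm : 0 < m) (hc1l : m ≤ f1 θ) (hc2 : |f2 θ| ≤ M) (hc3 : |f3 θ| ≤ M) (hc4 : |f4 θ| ≤ M)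
    (hM : 0 ≤ M) (hD : 0 ≤ D₀)
    (hd1 : |x₁ - θ| ≤ D₀) (hd2 : |x₂ - θ| ≤ D₀) (hd3 : |x₃ - θ| ≤ D₀) :
    |Qexpr f1 f2 f3 f4 θ x₁ x₂ x₃| ≤ KQ (M / (2 * m)) D₀ := by
  have hΦ : 0 ≤ M / (2 * m) := div_nonneg hM (by linarith)
  have hφ1 : |f2 θ / (2 * f1 θ)| ≤ M / (2 * m) := phi_bound hm hc1l hc2 le_rfl
  have hφ2 : |f3 θ / (6 * f1 θ)| ≤ M / (2 * m) := phi_bound hm hc1l hc3 (by norm_num)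
  have hφ3 : |f4 θ / (24 * f1 θ)| ≤ M / (2 * m) := phi_bound hm hc1l hc4 (by norm_num)
  simp only [Qexpr]
  exact Qcore_bound hφ1 hφ2 hφ3 hΦ hd1 hd2 hd3 hD


set_option maxHeartbeats 1600000 in
theorem ratio_distortion_expansion_any_base_point
    (A B γ : ℝ) (hAB : A < B) (hγ : γ ∈ Set.Ioc (0 : ℝ) 1)
    (f f1 f2 f3 f4 : ℝ → ℝ)
    (hf1 : ∀ x ∈ Set.Icc A B, HasDerivWithinAt f (f1 x) (Set.Icc A B) x)
    (hf2 : ∀ x ∈ Set.Icc A B, HasDerivWithinAt f1 (f2 x) (Set.Icc A B) x)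
    (hf3 : ∀ x ∈ Set.Icc A B, HasDerivWithinAt f2 (f3 x) (Set.Icc A B) x)
    (hf4 : ∀ x ∈ Set.Icc A B, HasDerivWithinAt f3 (f4 x) (Set.Icc A B) x)
    (H : ℝ)
    (hH : ∀ x ∈ Set.Icc A B, ∀ y ∈ Set.Icc A B, |f4 x - f4 y| ≤ H * |x - y| ^ γ)
    (hf1pos : ∀ x ∈ Set.Icc A B, 0 < f1 x) :
    ∃ C > 0, ∀ x₁ ∈ Set.Icc A B, ∀ x₂ ∈ Set.Icc A B, ∀ x₃ ∈ Set.Icc A B,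
      ∀ θ ∈ Set.Icc A B,
      |ratioDist f f1 x₁ x₂ x₃ - 1 - (x₁ - x₃) * Qexpr f1 f2 f3 f4 θ x₁ x₂ x₃| ≤
        C * |x₁ - x₃| * Metric.diam ({x₁, x₂, x₃, θ} : Set ℝ) ^ (2 + γ) := by
  obtain ⟨hγ0, hγ1⟩ := hγ
  have hABle := hAB.le
  have hf1c : ContinuousOn f1 (Set.Icc A B) := fun x hx => (hf2 x hx).continuousWithinAt
  have hf2c : ContinuousOn f2 (Set.Icc A B) := fun x hx => (hf3 x hx).continuousWithinAt
  have hf3c : ContinuousOn f3 (Set.Icc A B) := fun x hx => (hf4 x hx).continuousWithinAt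
  have hAmem : A ∈ Set.Icc A B := Set.left_mem_Icc.2 hABle
  set H' := max H 0 with hH'def
  have hH'0 : 0 ≤ H' := le_max_right H 0
  have hH' : ∀ x ∈ Set.Icc A B, ∀ y ∈ Set.Icc A B, |f4 x - f4 y| ≤ H' * |x - y| ^ γ :=
    fun x hx y hy => (hH x hx y hy).trans
      (mul_le_mul_of_nonneg_right (le_max_left H 0) (Real.rpow_nonneg (abs_nonneg _) _))
  obtain ⟨xm, hxm, hminOn⟩ := isCompact_Icc.exists_isMinOn ⟨A, hAmem⟩ hf1c
  set m := f1 xm with hmdef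
  have hmin : ∀ y ∈ Set.Icc A B, m ≤ f1 y := fun y hy => hminOn hy
  have hm0 : 0 < m := hf1pos xm hxm
  obtain ⟨M1, hM1⟩ := isCompact_Icc.exists_bound_of_continuousOn hf1c
  obtain ⟨M2, hM2⟩ := isCompact_Icc.exists_bound_of_continuousOn hf2c
  obtain ⟨M3, hM3⟩ := isCompact_Icc.exists_bound_of_continuousOn hf3c
  have hM4 : ∀ x ∈ Set.Icc A B, |f4 x| ≤ |f4 A| + H' * (B - A) ^ γ := by
    intro x hx
    have h1 : |f4 x - f4 A| ≤ H' * |x - A| ^ γ := hH' x hx A hAmem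
    have h2 : |x - A| ^ γ ≤ (B - A) ^ γ := by
      apply Real.rpow_le_rpow (abs_nonneg _) _ hγ0.le
      rw [abs_of_nonneg (by linarith [hx.1])]
      linarith [hx.2]
    have h3 := mul_le_mul_of_nonneg_left h2 hH'0
    calc |f4 x| = |f4 A + (f4 x - f4 A)| := by ring_nf
      _ ≤ |f4 A| + |f4 x - f4 A| := abs_add_le _ _
      _ ≤ |f4 A| + H' * (B - A) ^ γ := by linarith
  set M := max (max M1 M2) (max M3 (|f4 A| + H' * (B - A) ^ γ)) with hMdef
  have hMf1 : ∀ x ∈ Set.Icc A B, |f1 x| ≤ M := fun x hx =>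
    (Real.norm_eq_abs _ ▸ hM1 x hx).trans ((le_max_left M1 M2).trans (le_max_left _ _))
  have hMf2 : ∀ x ∈ Set.Icc A B, |f2 x| ≤ M := fun x hx =>
    (Real.norm_eq_abs _ ▸ hM2 x hx).trans ((le_max_right M1 M2).trans (le_max_left _ _))
  have hMf3 : ∀ x ∈ Set.Icc A B, |f3 x| ≤ M := fun x hx =>
    (Real.norm_eq_abs _ ▸ hM3 x hx).trans ((le_max_left M3 _).trans (le_max_right _ _))
  have hMf4 : ∀ x ∈ Set.Icc A B, |f4 x| ≤ M := fun x hx =>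
    (hM4 x hx).trans ((le_max_right M3 _).trans (le_max_right _ _))
  set D₀ := B - A with hD₀def
  have hD00 : 0 < D₀ := by rw [hD₀def]; linarith
  set Φ := M / (2 * m) with hΦdef
  have hM0 : 0 ≤ M := (abs_nonneg _).trans (hMf1 A hAmem)
  have hΦ0 : 0 ≤ Φ := div_nonneg hM0 (by linarith)
  have hKc0 : 0 ≤ Kc Φ D₀ := Kc_nonneg hΦ0 hD00.le
  have hKQ0 : 0 ≤ KQ Φ D₀ := KQ_nonneg hΦ0 hD00.le
  refine ⟨(M * Kc Φ D₀ * D₀ ^ (1 - γ) + H' + KQ Φ D₀ * H' * D₀) / m + 1, ?_, ?_⟩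
  · have h1 : 0 ≤ M * Kc Φ D₀ * D₀ ^ (1 - γ) :=
      mul_nonneg (mul_nonneg hM0 hKc0) (Real.rpow_nonneg hD00.le _)
    have h2 : 0 ≤ KQ Φ D₀ * H' * D₀ := mul_nonneg (mul_nonneg hKQ0 hH'0) hD00.le
    have h3 : 0 ≤ (M * Kc Φ D₀ * D₀ ^ (1 - γ) + H' + KQ Φ D₀ * H' * D₀) / m :=
      div_nonneg (by linarith) hm0.le
    linarith
  intro x₁ hx1 x₂ hx2 x₃ hx3 θ hθ
  have hbdd : Bornology.IsBounded ({x₁, x₂, x₃, θ} : Set ℝ) := (Set.toFinite _).isBounded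
  set Δ := Metric.diam ({x₁, x₂, x₃, θ} : Set ℝ) with hΔdef
  have hΔ0 : 0 ≤ Δ := Metric.diam_nonneg
  have hdd : ∀ a ∈ ({x₁, x₂, x₃, θ} : Set ℝ), ∀ b ∈ ({x₁, x₂, x₃, θ} : Set ℝ),
      |a - b| ≤ Δ := by
    intro a ha b hb
    rw [← Real.dist_eq]
    exact Metric.dist_le_diam_of_mem hbdd ha hb
  have hd12 : |x₁ - x₂| ≤ Δ := hdd _ (by simp) _ (by simp)
  have hd23 : |x₂ - x₃| ≤ Δ := hdd _ (by simp) _ (by simp)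
  have hd1θ : |x₁ - θ| ≤ Δ := hdd _ (by simp) _ (by simp)
  have hd2θ : |x₂ - θ| ≤ Δ := hdd _ (by simp) _ (by simp)
  have hd3θ : |x₃ - θ| ≤ Δ := hdd _ (by simp) _ (by simp)
  have hΔD : Δ ≤ D₀ := by
    have hsub : ({x₁, x₂, x₃, θ} : Set ℝ) ⊆ Set.Icc A B := by
      intro z hz
      simp only [Set.mem_insert_iff, Set.mem_singleton_iff] at hz
      rcases hz with rfl | rfl | rfl | rfl <;> assumption
    have h := Metric.diam_mono hsub (Metric.isBounded_Icc A B)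
    rwa [Real.diam_Icc hABle] at h
  rcases eq_or_lt_of_le hΔ0 with hΔz | hΔpos
  · -- degenerate case: all four points coincide
    have e12 : x₁ = x₂ := by
      have h0 : |x₁ - x₂| ≤ 0 := by rw [hΔz]; exact hd12
      exact sub_eq_zero.1 (abs_eq_zero.1 (le_antisymm h0 (abs_nonneg _)))
    have e23 : x₂ = x₃ := by
      have h0 : |x₂ - x₃| ≤ 0 := by rw [hΔz]; exact hd23
      exact sub_eq_zero.1 (abs_eq_zero.1 (le_antisymm h0 (abs_nonneg _)))
    have hone : ratioDist f f1 x₁ x₂ x₃ = 1 := by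
      rw [← e12, ← e23] at *
      simp only [ratioDist, dq, if_pos rfl]
      exact div_self (ne_of_gt (hf1pos x₁ hx1))
    rw [hone, ← e23, ← e12]
    simp
  · -- main case
    have hr2d := r2_deriv (f3 := f3) (f4 := f4) θ hf4
    have hr1d := r1_deriv (f2 := f2) (f3 := f3) (f4 := f4) θ hf3
    have hr0d := r0_deriv (f1 := f1) (f2 := f2) (f3 := f3) (f4 := f4) θ hf2
    have hgd := gP_deriv (f := f) (f1 := f1) (f2 := f2) (f3 := f3) (f4 := f4) θ hf1
    have hρ0c : ContinuousOn (r0 f1 f2 f3 f4 θ) (Set.Icc A B) :=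
      fun x hx => (hr0d x hx).continuousWithinAt
    have hb3 : ∀ x ∈ Set.Icc A B, |f4 x - f4 θ| ≤ H' * |x - θ| ^ γ :=
      fun x hx => hH' x hx θ hθ
    have hb2 := taylor_step hABle hγ0 hH'0 hθ hr2d (by simp [r2]) hb3
    have hb1 := taylor_step hABle (by linarith : (0:ℝ) < γ + 1) hH'0 hθ hr1d
      (by simp [r1]) hb2
    have hb0 := taylor_step hABle (by linarith : (0:ℝ) < γ + 1 + 1) hH'0 hθ hr0d
      (by simp [r0]) hb1
    have hE23 : |dq (gP f f1 f2 f3 f4 θ) (r0 f1 f2 f3 f4 θ) x₂ x₃| ≤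
        H' * Δ ^ (γ + 1 + 1 + 1) := by
      apply dq_abs_le hgd hρ0c hx2 hx3
      intro t ht
      have hu := affine_mem_Icc hx2 hx3 ht
      have h2 : |x₃ + t * (x₂ - x₃) - θ| ≤ Δ := affine_abs_le ht hd2θ hd3θ
      calc |r0 f1 f2 f3 f4 θ (x₃ + t * (x₂ - x₃))|
          ≤ H' * |x₃ + t * (x₂ - x₃) - θ| ^ (γ + 1 + 1 + 1) := hb0 _ hu
        _ ≤ H' * Δ ^ (γ + 1 + 1 + 1) := mul_le_mul_of_nonneg_left
            (Real.rpow_le_rpow (abs_nonneg _) h2 (by linarith)) hH'0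
    have hE12d : |dq (gP f f1 f2 f3 f4 θ) (r0 f1 f2 f3 f4 θ) x₁ x₂ -
        dq (gP f f1 f2 f3 f4 θ) (r0 f1 f2 f3 f4 θ) x₃ x₂| ≤
        H' * Δ ^ (γ + 1 + 1) * |x₁ - x₃| := by
      apply dq_diff_le hgd hρ0c hx1 hx2 hx3
      intro t ht
      have hu : x₂ + t * (x₁ - x₂) ∈ Set.Icc A B := affine_mem_Icc hx1 hx2 ht
      have hv : x₂ + t * (x₃ - x₂) ∈ Set.Icc A B := affine_mem_Icc hx3 hx2 ht
      have huθ : |x₂ + t * (x₁ - x₂) - θ| ≤ Δ := affine_abs_le ht hd1θ hd2θ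
      have hvθ : |x₂ + t * (x₃ - x₂) - θ| ≤ Δ := affine_abs_le ht hd3θ hd2θ
      have hsub : Set.uIcc (x₂ + t * (x₃ - x₂)) (x₂ + t * (x₁ - x₂)) ⊆ Set.Icc A B :=
        uIcc_subset_Icc' hABle hv hu
      have key : ‖r0 f1 f2 f3 f4 θ (x₂ + t * (x₁ - x₂)) -
          r0 f1 f2 f3 f4 θ (x₂ + t * (x₃ - x₂))‖ ≤
          (H' * Δ ^ (γ + 1 + 1)) * ‖(x₂ + t * (x₁ - x₂)) - (x₂ + t * (x₃ - x₂))‖ := by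
        apply (convex_uIcc _ _).norm_image_sub_le_of_norm_hasDerivWithin_le
          (fun w hw => (hr0d w (hsub hw)).mono hsub) (fun w hw => ?_)
          Set.left_mem_uIcc Set.right_mem_uIcc
        have hwθ : |w - θ| ≤ Δ := by
          have h := abs_sub_le_of_mem_uIcc (θ := θ) hw
          exact h.trans (max_le hvθ huθ)
        calc ‖r1 f2 f3 f4 θ w‖ = |r1 f2 f3 f4 θ w| := rfl
          _ ≤ H' * |w - θ| ^ (γ + 1 + 1) := hb1 w (hsub hw)
          _ ≤ H' * Δ ^ (γ + 1 + 1) := mul_le_mul_of_nonneg_left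
              (Real.rpow_le_rpow (abs_nonneg _) hwθ (by linarith)) hH'0
      have huv : ‖(x₂ + t * (x₁ - x₂)) - (x₂ + t * (x₃ - x₂))‖ ≤ |x₁ - x₃| := by
        have he : (x₂ + t * (x₁ - x₂)) - (x₂ + t * (x₃ - x₂)) = t * (x₁ - x₃) := by ring
        rw [Real.norm_eq_abs, he, abs_mul, abs_of_nonneg ht.1]
        nlinarith [abs_nonneg (x₁ - x₃), ht.2]
      calc |r0 f1 f2 f3 f4 θ (x₂ + t * (x₁ - x₂)) -
          r0 f1 f2 f3 f4 θ (x₂ + t * (x₃ - x₂))| ≤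
          (H' * Δ ^ (γ + 1 + 1)) * ‖(x₂ + t * (x₁ - x₂)) - (x₂ + t * (x₃ - x₂))‖ := key
        _ ≤ H' * Δ ^ (γ + 1 + 1) * |x₁ - x₃| := mul_le_mul_of_nonneg_left huv
            (mul_nonneg hH'0 (Real.rpow_nonneg hΔ0 _))
    have hDnm : m ≤ dq f f1 x₂ x₃ := dq_lower hf1 hf1c hx2 hx3 hmin
    have hDnpos : 0 < dq f f1 x₂ x₃ := lt_of_lt_of_le hm0 hDnm
    have hDn0 : dq f f1 x₂ x₃ ≠ 0 := ne_of_gt hDnpos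
    have hf1θm : m ≤ f1 θ := hmin θ hθ
    have hf1θ : f1 θ ≠ 0 := ne_of_gt (lt_of_lt_of_le hm0 hf1θm)
    have hW := Wexpr_bound (θ := θ) (x₁ := x₁) (x₂ := x₂) (x₃ := x₃) hm0 hf1θm
      (hMf1 θ hθ) (hMf2 θ hθ) (hMf3 θ hθ) (hMf4 θ hθ) hΔ0 hΔD hd1θ hd2θ hd3θ
    have hQb := Qexpr_bound f1 f2 f3 f4 hm0 hf1θm (hMf2 θ hθ) (hMf3 θ hθ) (hMf4 θ hθ)
      hM0 hD00.le (hd1θ.trans hΔD) (hd2θ.trans hΔD) (hd3θ.trans hΔD)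
    rw [← hΦdef] at hW hQb
    have hQid := NB_Q_identity f1 f2 f3 f4 θ x₁ x₂ x₃ hf1θ
    have d1 := Edec f f1 f2 f3 f4 θ x₁ x₂
    have d2 := Edec f f1 f2 f3 f4 θ x₂ x₃
    have hsymE : dq (gP f f1 f2 f3 f4 θ) (r0 f1 f2 f3 f4 θ) x₂ x₃ =
        dq (gP f f1 f2 f3 f4 θ) (r0 f1 f2 f3 f4 θ) x₃ x₂ := dq_symm _ _ _ _
    have hnum : dq f f1 x₁ x₂ - dq f f1 x₂ x₃ -
        (x₁ - x₃) * Qexpr f1 f2 f3 f4 θ x₁ x₂ x₃ * dq f f1 x₂ x₃ =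
        (x₁ - x₃) * Wexpr (f1 θ) (f2 θ) (f3 θ) (f4 θ) θ x₁ x₂ x₃ +
          (dq (gP f f1 f2 f3 f4 θ) (r0 f1 f2 f3 f4 θ) x₁ x₂ -
            dq (gP f f1 f2 f3 f4 θ) (r0 f1 f2 f3 f4 θ) x₃ x₂) -
          (x₁ - x₃) * Qexpr f1 f2 f3 f4 θ x₁ x₂ x₃ *
            dq (gP f f1 f2 f3 f4 θ) (r0 f1 f2 f3 f4 θ) x₂ x₃ := by
      rw [d1, d2, ← hsymE]
      linear_combination hQid
    have hsplit : ratioDist f f1 x₁ x₂ x₃ - 1 - (x₁ - x₃) * Qexpr f1 f2 f3 f4 θ x₁ x₂ x₃ =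
        (dq f f1 x₁ x₂ - dq f f1 x₂ x₃ -
          (x₁ - x₃) * Qexpr f1 f2 f3 f4 θ x₁ x₂ x₃ * dq f f1 x₂ x₃) / dq f f1 x₂ x₃ := by
      simp only [ratioDist]
      field_simp
    have hX0 : 0 ≤ |x₁ - x₃| := abs_nonneg _
    have hT0 : 0 ≤ Δ ^ (2 + γ) := Real.rpow_nonneg hΔ0 _
    have habs : |dq f f1 x₁ x₂ - dq f f1 x₂ x₃ -
        (x₁ - x₃) * Qexpr f1 f2 f3 f4 θ x₁ x₂ x₃ * dq f f1 x₂ x₃| ≤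
        |x₁ - x₃| * (M * (Kc Φ D₀ * Δ ^ 3)) + H' * Δ ^ (γ + 1 + 1) * |x₁ - x₃| +
          |x₁ - x₃| * KQ Φ D₀ * (H' * Δ ^ (γ + 1 + 1 + 1)) := by
      rw [hnum]
      have a1 : |(x₁ - x₃) * Wexpr (f1 θ) (f2 θ) (f3 θ) (f4 θ) θ x₁ x₂ x₃| ≤
          |x₁ - x₃| * (M * (Kc Φ D₀ * Δ ^ 3)) := by
        rw [abs_mul]; exact mul_le_mul_of_nonneg_left hW hX0
      have a3 : |(x₁ - x₃) * Qexpr f1 f2 f3 f4 θ x₁ x₂ x₃ *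
          dq (gP f f1 f2 f3 f4 θ) (r0 f1 f2 f3 f4 θ) x₂ x₃| ≤
          |x₁ - x₃| * KQ Φ D₀ * (H' * Δ ^ (γ + 1 + 1 + 1)) := by
        rw [abs_mul, abs_mul]
        exact mul_le_mul (mul_le_mul_of_nonneg_left hQb hX0) hE23 (abs_nonneg _)
          (mul_nonneg hX0 hKQ0)
      have t1 := abs_sub ((x₁ - x₃) * Wexpr (f1 θ) (f2 θ) (f3 θ) (f4 θ) θ x₁ x₂ x₃ +
          (dq (gP f f1 f2 f3 f4 θ) (r0 f1 f2 f3 f4 θ) x₁ x₂ -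
            dq (gP f f1 f2 f3 f4 θ) (r0 f1 f2 f3 f4 θ) x₃ x₂))
          ((x₁ - x₃) * Qexpr f1 f2 f3 f4 θ x₁ x₂ x₃ *
            dq (gP f f1 f2 f3 f4 θ) (r0 f1 f2 f3 f4 θ) x₂ x₃)
      have t2 := abs_add_le ((x₁ - x₃) * Wexpr (f1 θ) (f2 θ) (f3 θ) (f4 θ) θ x₁ x₂ x₃)
          (dq (gP f f1 f2 f3 f4 θ) (r0 f1 f2 f3 f4 θ) x₁ x₂ -
            dq (gP f f1 f2 f3 f4 θ) (r0 f1 f2 f3 f4 θ) x₃ x₂)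
      linarith [hE12d]
    have r2eq : Δ ^ (γ + 1 + 1) = Δ ^ (2 + γ) := by
      rw [show γ + 1 + 1 = 2 + γ from by ring]
    have r1' : Δ ^ (3 : ℕ) ≤ D₀ ^ (1 - γ) * Δ ^ (2 + γ) := by
      have h3 : ((3 : ℕ) : ℝ) = (1 - γ) + (2 + γ) := by push_cast; ring
      rw [← Real.rpow_natCast Δ 3, h3, Real.rpow_add hΔpos]
      exact mul_le_mul_of_nonneg_right (Real.rpow_le_rpow hΔ0 hΔD (by linarith)) hT0
    have r3' : Δ ^ (γ + 1 + 1 + 1) ≤ D₀ * Δ ^ (2 + γ) := by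
      rw [show γ + 1 + 1 + 1 = 1 + (2 + γ) from by ring, Real.rpow_add hΔpos, Real.rpow_one]
      exact mul_le_mul_of_nonneg_right hΔD hT0
    calc |ratioDist f f1 x₁ x₂ x₃ - 1 - (x₁ - x₃) * Qexpr f1 f2 f3 f4 θ x₁ x₂ x₃|
        = |dq f f1 x₁ x₂ - dq f f1 x₂ x₃ -
            (x₁ - x₃) * Qexpr f1 f2 f3 f4 θ x₁ x₂ x₃ * dq f f1 x₂ x₃| / dq f f1 x₂ x₃ := by
          rw [hsplit, abs_div, abs_of_pos hDnpos]
      _ ≤ |dq f f1 x₁ x₂ - dq f f1 x₂ x₃ -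
            (x₁ - x₃) * Qexpr f1 f2 f3 f4 θ x₁ x₂ x₃ * dq f f1 x₂ x₃| / m :=
          div_le_div_of_nonneg_left (abs_nonneg _) hm0 hDnm
      _ ≤ (|x₁ - x₃| * (M * (Kc Φ D₀ * Δ ^ 3)) + H' * Δ ^ (γ + 1 + 1) * |x₁ - x₃| +
            |x₁ - x₃| * KQ Φ D₀ * (H' * Δ ^ (γ + 1 + 1 + 1))) / m :=
          (div_le_div_iff_of_pos_right hm0).2 habs
      _ ≤ ((M * Kc Φ D₀ * D₀ ^ (1 - γ) + H' + KQ Φ D₀ * H' * D₀) / m) *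
            (|x₁ - x₃| * Δ ^ (2 + γ)) := by
          rw [div_mul_eq_mul_div]
          apply (div_le_div_iff_of_pos_right hm0).2
          rw [r2eq]
          nlinarith [mul_le_mul_of_nonneg_left r1' (mul_nonneg (mul_nonneg hX0 hM0) hKc0),
            mul_le_mul_of_nonneg_left r3' (mul_nonneg (mul_nonneg hX0 hKQ0) hH'0),
            mul_nonneg hX0 hT0, mul_nonneg (mul_nonneg hH'0 hT0) hX0]
      _ ≤ ((M * Kc Φ D₀ * D₀ ^ (1 - γ) + H' + KQ Φ D₀ * H' * D₀) / m + 1) *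
            |x₁ - x₃| * Δ ^ (2 + γ) := by
          nlinarith [mul_nonneg hX0 hT0]
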